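/- Let (X,τ) be a topological space, A ⊆ X a dense subset of (X,τ), and for each x ∈ A \ interior(A) let U_x be an open set with x ∈ U_x; let I_A be the ideal generated by {U_x \ A : x ∈ A \ interior(A)}, and let τ* be the topology generated by {V \ I : V ∈ τ, I ∈ I_A}. Then the semiregularization of τ equals the semiregularization of τ*, i.e. the topology generated by the regular open sets of τ equals the topology generated by the regular open sets of τ*. -/

import Mathlib

open TopologicalSpace Set Topology

/-- The ideal generated by the sets `U x \ A` for `x ∈ A \ interior A`. -/
def genIdeal {X : Type*} [TopologicalSpace X] (A : Set X) (U : X → Set X) : Set (Set X) :=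
  {S | ∃ F : Finset X, ↑F ⊆ A \ interior A ∧ S ⊆ ⋃ x ∈ F, U x \ A}

/-- The topology `τ*` generated by `{V \ I : V open, I in the ideal}`. -/
def starTop {X : Type*} [TopologicalSpace X] (I : Set (Set X)) : TopologicalSpace X :=
  generateFrom {s | ∃ V J, IsOpen V ∧ J ∈ I ∧ s = V \ J}

/-- The semiregularization of a topology: the topology generated by its regular open sets. -/
def semireg {X : Type*} (t : TopologicalSpace X) : TopologicalSpace X :=
  generateFrom {W : Set X | W = @interior X t (@closure X t W)}

/-!
The topology `τ*` is finer than `τ`, but every `τ*`-neighbourhood of a point contains the trace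
on `A` of a `τ`-neighbourhood, because the sets of the ideal miss `A`. For a dense `A` this is
enough to make the `τ`- and `τ*`-closures of a `τ*`-open set agree, and likewise the interiors of
a `τ`-closed set; hence `τ` and `τ*` have the same regular open sets.
-/

section FinerTopology

-- `t` is bound after `σ` so that instance search finds `t`; `σ` is always passed explicitly.
variable {X : Type*} {σ : TopologicalSpace X} [t : TopologicalSpace X] {A : Set X}

theorem closure_subset_closure_of_nhdsWithin_le (hσ : ∀ x, 𝓝[A] x ≤ @nhds X σ x) {S : Set X}
    (hS : S ⊆ A) : closure S ⊆ closure[σ] S := by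
  intro x hx
  rw [mem_closure_iff_nhdsWithin_neBot] at hx
  rw [@mem_closure_iff_nhdsWithin_neBot X σ]
  have hle : 𝓝[S] x ≤ @nhdsWithin X σ x S :=
    calc 𝓝[S] x = 𝓝[A] x ⊓ Filter.principal S := by
          rw [nhdsWithin, nhdsWithin, inf_assoc, Filter.inf_principal, inter_eq_right.2 hS]
      _ ≤ @nhdsWithin X σ x S := inf_le_inf_right _ (hσ x)
  exact hx.mono hle

theorem subset_closure_inter_of_nhdsWithin_le (hA : Dense A) (hσ : ∀ x, 𝓝[A] x ≤ @nhds X σ x)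
    {G : Set X} (hG : IsOpen[σ] G) : G ⊆ closure (G ∩ A) := by
  intro x hx
  obtain ⟨V, hV, hxV, hVA⟩ := mem_nhdsWithin.1 (hσ x (@IsOpen.mem_nhds X σ _ _ hG hx))
  exact closure_mono (subset_inter hVA inter_subset_right) (hA.open_subset_closure_inter hV hxV)

variable (hσt : σ ≤ t) (hA : Dense A) (hσ : ∀ x, 𝓝[A] x ≤ @nhds X σ x)
include hσt hA hσ

theorem closure_eq_of_nhdsWithin_le {G : Set X} (hG : IsOpen[σ] G) :
    closure[σ] G = closure G := by
  refine (closure.mono hσt).antisymm ?_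
  calc closure G ⊆ closure (G ∩ A) :=
        closure_minimal (subset_closure_inter_of_nhdsWithin_le hA hσ hG) isClosed_closure
    _ ⊆ closure[σ] (G ∩ A) := closure_subset_closure_of_nhdsWithin_le hσ inter_subset_right
    _ ⊆ closure[σ] G := @closure_mono X σ _ _ inter_subset_left

theorem interior_eq_of_nhdsWithin_le {C : Set X} (hC : IsClosed C) :
    @interior X σ C = interior C := by
  refine subset_antisymm (fun x hx => ?_)
    (@interior_maximal X σ _ _ interior_subset (isOpen_interior.mono hσt))
  have hCx : C ∈ @nhds X σ x := (@mem_interior_iff_mem_nhds X σ _ _).1 hx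
  obtain ⟨V, hV, hxV, hVA⟩ := mem_nhdsWithin.1 (hσ x hCx)
  have hVC : V ⊆ C := (hA.open_subset_closure_inter hV).trans (closure_minimal hVA hC)
  exact interior_maximal hVC hV hxV

theorem interior_closure_eq_of_nhdsWithin_le {W : Set X} (hW : IsOpen[σ] W) :
    @interior X σ (closure[σ] W) = interior (closure W) := by
  rw [closure_eq_of_nhdsWithin_le hσt hA hσ hW,
    interior_eq_of_nhdsWithin_le hσt hA hσ isClosed_closure]

theorem semireg_eq_of_nhdsWithin_le : semireg t = semireg σ := by
  refine congrArg generateFrom (ext fun W => ⟨fun hW => ?_, fun hW => ?_⟩)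
  · have hWt : IsOpen W := hW ▸ isOpen_interior
    have hWσ : IsOpen[σ] W := hWt.mono hσt
    exact hW.trans (interior_closure_eq_of_nhdsWithin_le hσt hA hσ hWσ).symm
  · have hWσ : IsOpen[σ] W := hW ▸ @isOpen_interior X σ _
    exact hW.trans (interior_closure_eq_of_nhdsWithin_le hσt hA hσ hWσ)

end FinerTopology

section StarTopology

variable {X : Type*} [TopologicalSpace X] {A : Set X} {I : Set (Set X)}

theorem starTop_le (hI : ∅ ∈ I) : starTop I ≤ ‹TopologicalSpace X› :=
  fun V hV => GenerateOpen.basic _ ⟨V, ∅, hV, hI, sdiff_empty.symm⟩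

theorem nhdsWithin_le_nhds_starTop (hI : ∀ J ∈ I, Disjoint J A) (x : X) :
    𝓝[A] x ≤ @nhds X (starTop I) x := by
  rw [starTop, nhds_generateFrom]
  refine le_iInf₂ ?_
  rintro _ ⟨hxs, V, J, hV, hJ, rfl⟩
  refine Filter.le_principal_iff.2 (mem_nhdsWithin.2 ⟨V, hV, hxs.1, fun y hy => ⟨hy.1, ?_⟩⟩)
  exact fun hyJ => (hI J hJ).notMem_of_mem_left hyJ hy.2

end StarTopology

theorem empty_mem_genIdeal {X : Type*} [TopologicalSpace X] (A : Set X) (U : X → Set X) :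
    ∅ ∈ genIdeal A U :=
  ⟨∅, by simp, empty_subset _⟩

theorem disjoint_of_mem_genIdeal {X : Type*} [TopologicalSpace X] {A : Set X} {U : X → Set X}
    {J : Set X} (hJ : J ∈ genIdeal A U) : Disjoint J A := by
  obtain ⟨F, -, hJF⟩ := hJ
  exact disjoint_of_subset_left hJF (disjoint_iUnion₂_left.2 fun _ _ => disjoint_sdiff_left)

theorem stmt5_general {X : Type*} [t : TopologicalSpace X] (A : Set X) (hA : Dense A)
    (U : X → Set X) :
    semireg t = semireg (starTop (genIdeal A U)) :=
  semireg_eq_of_nhdsWithin_le (starTop_le (empty_mem_genIdeal A U)) hA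
    (nhdsWithin_le_nhds_starTop fun _ => disjoint_of_mem_genIdeal)

theorem stmt5 {X : Type*} [t : TopologicalSpace X] (A : Set X) (hA : Dense A)
    (U : X → Set X)
    (hUopen : ∀ x ∈ A \ interior A, IsOpen (U x))
    (hUmem : ∀ x ∈ A \ interior A, x ∈ U x) :
    semireg t = semireg (starTop (genIdeal A U)) :=
  stmt5_general (t := t) A hA U
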